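/- arXiv:1707.06802 — 5 statements merged into one kernel-verified Lean document; each statement's English description precedes it below -/
import Mathlib

section
/- The identity matrix of size n is an alternating sign matrix uniquely determined by its antidiagonal X-ray, which is the vector with x_k = 1 if k is odd and 0 if k is even (for k = 1,…,2n-1). -/
open Finset Matrix

/-- An alternating sign matrix: entries in {-1,0,1}, all row and column sums
equal 1, and consecutive nonzero entries in each row and column have
opposite signs. -/
def IsASM {n : ℕ} (A : Matrix (Fin n) (Fin n) ℤ) : Prop :=
  (∀ i j, A i j = -1 ∨ A i j = 0 ∨ A i j = 1) ∧
  (∀ i, ∑ j, A i j = 1) ∧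
  (∀ j, ∑ i, A i j = 1) ∧
  (∀ i (j₁ j₂ : Fin n), j₁ < j₂ → A i j₁ ≠ 0 → A i j₂ ≠ 0 →
    (∀ j, j₁ < j → j < j₂ → A i j = 0) → A i j₂ = -A i j₁) ∧
  (∀ j (i₁ i₂ : Fin n), i₁ < i₂ → A i₁ j ≠ 0 → A i₂ j ≠ 0 →
    (∀ i, i₁ < i → i < i₂ → A i j = 0) → A i₂ j = -A i₁ j)

/-- The `k`-th antidiagonal sum (1-based: cells `(i,j)` with `i+j = k+1`,
i.e. `0`-based indices with `i+j+1 = k`), for `k = 1, …, 2n-1`. -/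
def xray {n : ℕ} (A : Matrix (Fin n) (Fin n) ℤ) (k : ℕ) : ℤ :=
  ∑ i : Fin n, ∑ j : Fin n, if (i : ℕ) + (j : ℕ) + 1 = k then A i j else 0

/-- `A` is the unique ASM with its X-ray. -/
def DeterminedByXray {n : ℕ} (A : Matrix (Fin n) (Fin n) ℤ) : Prop :=
  ∀ B : Matrix (Fin n) (Fin n) ℤ, IsASM B → (∀ k, xray B k = xray A k) → B = A

/-- The permutation matrix of `σ`. -/
def permMatrix {n : ℕ} (σ : Equiv.Perm (Fin n)) : Matrix (Fin n) (Fin n) ℤ :=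
  fun i j => if σ j = i then 1 else 0

/-!
Let `B` be an ASM with the X-ray of the identity. Sweep the antidiagonals in order. Once `B`
agrees with `1` above the antidiagonal through `(i, j)`, `B i j ≤ 1 i j`: on the diagonal because
entries are at most `1`, and off it because the nearest nonzero entry towards the diagonal in the
same row (or column) is the diagonal `1`, so alternation forces `B i j ∈ {0, -1}`. Entries that
are bounded termwise by those of `1` and have the same antidiagonal sum must all equal them.
-/

variable {n : ℕ}

lemma xray_one (k : ℕ) :
    xray (1 : Matrix (Fin n) (Fin n) ℤ) k =
      ∑ i : Fin n, if 2 * (i : ℕ) + 1 = k then 1 else 0 := by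
  refine Finset.sum_congr rfl fun i _ => ?_
  simp only [one_apply]
  rw [Finset.sum_eq_single i (fun j _ hji => by simp [Ne.symm hji]) (by simp)]
  simp only [if_true, two_mul]

lemma xray_one_of_le {k : ℕ} (hk : k ≤ 2 * n - 1) :
    xray (1 : Matrix (Fin n) (Fin n) ℤ) k = if Odd k then 1 else 0 := by
  rw [xray_one]
  split_ifs with hodd
  · obtain ⟨t, rfl⟩ := hodd
    rw [Finset.sum_eq_single ⟨t, by omega⟩
      (fun i _ hi => if_neg fun h => hi (Fin.ext (by simp; omega))) (by simp)]
    simp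
  · exact Finset.sum_eq_zero fun i _ => if_neg fun h => hodd ⟨i, h.symm⟩

lemma isASM_one : IsASM (1 : Matrix (Fin n) (Fin n) ℤ) := by
  have eq_of_ne_zero {i j : Fin n} (h : (1 : Matrix (Fin n) (Fin n) ℤ) i j ≠ 0) : i = j := by
    by_contra hij
    exact h (one_apply_ne hij)
  refine ⟨fun i j => ?_, fun i => by simp [one_apply], fun j => by simp [one_apply], ?_, ?_⟩
  · rw [one_apply]
    split_ifs <;> simp
  · intro i j₁ j₂ hlt h₁ h₂ _
    exact absurd ((eq_of_ne_zero h₁).symm.trans (eq_of_ne_zero h₂)) hlt.ne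
  · intro j i₁ i₂ hlt h₁ h₂ _
    exact absurd ((eq_of_ne_zero h₁).trans (eq_of_ne_zero h₂).symm) hlt.ne

namespace IsASM

variable {A : Matrix (Fin n) (Fin n) ℤ}

lemma le_one (hA : IsASM A) (i j : Fin n) : A i j ≤ 1 := by
  rcases hA.1 i j with h | h | h <;> omega

lemma row_nonpos_of_eq_one (hA : IsASM A) {i j₁ j₂ : Fin n} (hlt : j₁ < j₂)
    (h₁ : A i j₁ = 1) (hgap : ∀ j, j₁ < j → j < j₂ → A i j = 0) : A i j₂ ≤ 0 := by
  by_cases h₂ : A i j₂ = 0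
  · exact h₂.le
  · rw [hA.2.2.2.1 i j₁ j₂ hlt (by omega) h₂ hgap, h₁]
    norm_num

lemma col_nonpos_of_eq_one (hA : IsASM A) {j i₁ i₂ : Fin n} (hlt : i₁ < i₂)
    (h₁ : A i₁ j = 1) (hgap : ∀ i, i₁ < i → i < i₂ → A i j = 0) : A i₂ j ≤ 0 := by
  by_cases h₂ : A i₂ j = 0
  · exact h₂.le
  · rw [hA.2.2.2.2 j i₁ i₂ hlt (by omega) h₂ hgap, h₁]
    norm_num

lemma le_one_apply_of_eq_before (hA : IsASM A) {i j : Fin n}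
    (hbefore : ∀ i' j' : Fin n, (i' : ℕ) + j' < i + j →
      A i' j' = (1 : Matrix (Fin n) (Fin n) ℤ) i' j') :
    A i j ≤ (1 : Matrix (Fin n) (Fin n) ℤ) i j := by
  rcases lt_trichotomy i j with hij | rfl | hij
  · have hi : (i : ℕ) < j := hij
    rw [one_apply_ne hij.ne]
    refine hA.row_nonpos_of_eq_one hij (by rw [hbefore i i (by omega), one_apply_eq]) ?_
    intro c hic hcj
    have : (c : ℕ) < j := hcj
    rw [hbefore i c (by omega), one_apply_ne hic.ne]
  · rw [one_apply_eq]
    exact hA.le_one i i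
  · have hj : (j : ℕ) < i := hij
    rw [one_apply_ne hij.ne']
    refine hA.col_nonpos_of_eq_one hij (by rw [hbefore j j (by omega), one_apply_eq]) ?_
    intro c hjc hci
    have : (c : ℕ) < i := hci
    rw [hbefore c j (by omega), one_apply_ne hjc.ne']

end IsASM

lemma eq_on_antidiagonal_of_xray_eq {A B : Matrix (Fin n) (Fin n) ℤ} {k : ℕ}
    (hle : ∀ i j : Fin n, (i : ℕ) + j + 1 = k → B i j ≤ A i j) (hk : xray B k = xray A k)
    {i j : Fin n} (hij : (i : ℕ) + j + 1 = k) : B i j = A i j := by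
  have hterm : ∀ i j : Fin n, (if (i : ℕ) + j + 1 = k then B i j else 0) ≤
      if (i : ℕ) + j + 1 = k then A i j else 0 := fun i j => by
    split_ifs with h
    exacts [hle i j h, le_rfl]
  have hrow := (Finset.sum_eq_sum_iff_of_le fun i _ => Finset.sum_le_sum fun j _ => hterm i j).1
    hk i (mem_univ i)
  simpa [hij] using (Finset.sum_eq_sum_iff_of_le fun j _ => hterm i j).1 hrow j (mem_univ j)

lemma determinedByXray_one : DeterminedByXray (1 : Matrix (Fin n) (Fin n) ℤ) := by
  intro B hB hx
  suffices h : ∀ s, ∀ i j : Fin n, (i : ℕ) + j = s → B i j = (1 : Matrix _ _ ℤ) i j by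
    ext i j
    exact h _ i j rfl
  intro s
  induction s using Nat.strong_induction_on with
  | _ s ih =>
    intro i j hij
    refine eq_on_antidiagonal_of_xray_eq (fun i' j' h => ?_) (hx (s + 1)) (by omega)
    exact hB.le_one_apply_of_eq_before fun i'' j'' h' => ih _ (by omega) i'' j'' rfl

theorem stmt_8 {n : ℕ} :
    IsASM (1 : Matrix (Fin n) (Fin n) ℤ) ∧
    DeterminedByXray (1 : Matrix (Fin n) (Fin n) ℤ) ∧
    (∀ k, 1 ≤ k → k ≤ 2 * n - 1 →
      xray (1 : Matrix (Fin n) (Fin n) ℤ) k = if Odd k then 1 else 0) :=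
  ⟨isASM_one, determinedByXray_one, fun _ _ hk => xray_one_of_le hk⟩
end

section
/- For an n×n alternating sign matrix, every entry of the X-ray satisfies -⌊min(k, 2n-k)/2⌋ ≤ x_k and x_k ≤ ⌈min(k, 2n-k)/2⌉ + ⌊min(k, 2n-k)/2⌋, i.e., |x_k| is at most the length min(k, 2n-k) of the k-th antidiagonal. -/
open Finset Matrix

def antidiagonalCells (n k : ℕ) : Finset (Fin n × Fin n) :=
  {p | (p.1 : ℕ) + p.2 + 1 = k}

lemma xray_eq_sum_antidiagonalCells {n : ℕ} (A : Matrix (Fin n) (Fin n) ℤ) (k : ℕ) :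
    xray A k = ∑ p ∈ antidiagonalCells n k, A p.1 p.2 := by
  rw [antidiagonalCells, Finset.sum_filter, Fintype.sum_prod_type]
  rfl

/-- The row index identifies a cell of the antidiagonal; it ranges over `[k - n, min k n)`. -/
lemma card_antidiagonalCells (n k : ℕ) :
    #(antidiagonalCells n k) = min k (2 * n - k) := by
  have hrows : #(antidiagonalCells n k) = #(Ico (k - n) (min k n)) := by
    apply Finset.card_bij (fun p _ => (p.1 : ℕ))
    · intro p hp
      simp only [antidiagonalCells, mem_filter, mem_univ, true_and] at hp
      simp only [mem_Ico]
      omega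
    · intro p hp q hq hpq
      simp only [antidiagonalCells, mem_filter, mem_univ, true_and] at hp hq
      exact Prod.ext (Fin.ext hpq) (Fin.ext (by omega))
    · intro i hi
      simp only [mem_Ico] at hi
      refine ⟨(⟨i, by omega⟩, ⟨k - i - 1, by omega⟩), ?_, rfl⟩
      simp only [antidiagonalCells, mem_filter, mem_univ, true_and]
      omega
  rw [hrows, Nat.card_Ico]
  omega

lemma IsASM.abs_le_one {n : ℕ} {A : Matrix (Fin n) (Fin n) ℤ} (hA : IsASM A) (i j : Fin n) :
    |A i j| ≤ 1 := by
  rcases hA.1 i j with h | h | h <;> simp [h]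

lemma abs_xray_le_card_antidiagonalCells {n : ℕ} {A : Matrix (Fin n) (Fin n) ℤ}
    (hA : ∀ i j, |A i j| ≤ 1) (k : ℕ) :
    |xray A k| ≤ #(antidiagonalCells n k) := by
  calc |xray A k| ≤ ∑ p ∈ antidiagonalCells n k, |A p.1 p.2| := by
        rw [xray_eq_sum_antidiagonalCells]
        exact abs_sum_le_sum_abs _ _
    _ ≤ ∑ _p ∈ antidiagonalCells n k, (1 : ℤ) := sum_le_sum fun p _ => hA p.1 p.2
    _ = #(antidiagonalCells n k) := by simp

theorem stmt_9_general {n : ℕ} (A : Matrix (Fin n) (Fin n) ℤ) (hA : IsASM A)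
    (k : ℕ) (hk2 : k ≤ 2 * n - 1) :
    |xray A k| ≤ (min k (2 * n - k) : ℤ) := by
  have h := abs_xray_le_card_antidiagonalCells hA.abs_le_one k
  rwa [card_antidiagonalCells, Nat.cast_min, Nat.cast_sub (by omega), Nat.cast_mul,
    Nat.cast_ofNat] at h

theorem stmt_9 {n : ℕ} (A : Matrix (Fin n) (Fin n) ℤ) (hA : IsASM A)
    (k : ℕ) (hk1 : 1 ≤ k) (hk2 : k ≤ 2 * n - 1) :
    |xray A k| ≤ (min k (2 * n - k) : ℤ) :=
  stmt_9_general A hA k hk2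
end

section
/- There exists an injection from the set of Dyck paths of semilength n into the set of n×n alternating sign matrices, whose image consists of symmetric alternating sign matrices, such that distinct Dyck paths map to ASMs with distinct X-rays. -/
/-!
Let `h(k)` be the height of the Dyck path after `k` steps. The matrix attached to the path has,
for every peak (valley) after step `k`, entries `1` (`-1`) on the cells `(i, j)` of the
antidiagonal `i + j + 1 = k` with `|i - j| < h(k)`, and zeros elsewhere. It is symmetric, and its
partial row sums take only the values `0` and `1`, which characterises ASMs. The X-ray entry at
`k` is `h(k)`, `-h(k)` or `0` according as the path has a peak, a valley or neither there. Where
two paths first differ, the one going up climbs to a peak higher than the other path at that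
position, so their X-rays differ there.
-/

open Finset Matrix

section PrefixSums

variable {n : ℕ}

lemma eq_neg_of_eq_sub_of_zero_one {Q : ℕ → ℤ} (hQ : ∀ t, Q t = 0 ∨ Q t = 1) {r : Fin n → ℤ}
    (hr : ∀ j : Fin n, r j = Q (j + 1) - Q j) {j₁ j₂ : Fin n} (h₁₂ : j₁ < j₂)
    (h₁ : r j₁ ≠ 0) (h₂ : r j₂ ≠ 0) (hgap : ∀ j, j₁ < j → j < j₂ → r j = 0) :
    r j₂ = -r j₁ := by
  have hconst : ∀ m, (j₁ : ℕ) + 1 ≤ m → m ≤ j₂ → Q m = Q (j₁ + 1) := by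
    intro m hm
    induction m, hm using Nat.le_induction with
    | base => intro _; rfl
    | succ m hm ih =>
      intro hm₂
      have hzero : Q (m + 1) - Q m = 0 := (hr ⟨m, by omega⟩).symm.trans <|
        hgap ⟨m, by omega⟩ (Fin.lt_def.2 (show (j₁ : ℕ) < m by omega))
          (Fin.lt_def.2 (show m < (j₂ : ℕ) by omega))
      linarith [ih (by omega)]
  have hQ₂ := hconst j₂ (by omega) le_rfl
  rw [hr] at h₁ h₂ ⊢
  rw [hr j₁]
  rcases hQ j₁ with h | h <;> rcases hQ (j₁ + 1) with h' | h' <;>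
    rcases hQ (j₂ + 1) with h'' | h'' <;> omega

lemma sum_eq_sub_of_eq_sub {Q : ℕ → ℤ} {r : Fin n → ℤ}
    (hr : ∀ j : Fin n, r j = Q (j + 1) - Q j) : ∑ j, r j = Q n - Q 0 := by
  simp_rw [hr]
  exact (Fin.sum_univ_eq_sum_range (fun j => Q (j + 1) - Q j) n).trans (sum_range_sub Q n)

theorem isASM_of_partialSums (A : Matrix (Fin n) (Fin n) ℤ) (R C : Fin n → ℕ → ℤ)
    (hR : ∀ i t, R i t = 0 ∨ R i t = 1) (hC : ∀ j t, C j t = 0 ∨ C j t = 1)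
    (hAR : ∀ i j, A i j = R i (j + 1) - R i j) (hAC : ∀ i j, A i j = C j (i + 1) - C j i)
    (hR₀ : ∀ i, R i 0 = 0) (hRn : ∀ i, R i n = 1) (hC₀ : ∀ j, C j 0 = 0) (hCn : ∀ j, C j n = 1) :
    IsASM A := by
  refine ⟨fun i j => ?_, fun i => ?_, fun j => ?_, fun i j₁ j₂ => ?_, fun j i₁ i₂ => ?_⟩
  · rw [hAR]
    rcases hR i j with h | h <;> rcases hR i (j + 1) with h' | h' <;> omega
  · rw [sum_eq_sub_of_eq_sub (hAR i), hRn, hR₀]; rfl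
  · rw [sum_eq_sub_of_eq_sub (fun i => hAC i j), hCn, hC₀]; rfl
  · exact eq_neg_of_eq_sub_of_zero_one (hR i) (hAR i)
  · exact eq_neg_of_eq_sub_of_zero_one (hC j) (fun i => hAC i j)

end PrefixSums

namespace DyckWord

open DyckStep

variable {p q : DyckWord} {n : ℕ}

def up (p : DyckWord) (t : ℕ) : Prop := p.toList[t]? = some U

instance (p : DyckWord) : DecidablePred p.up := fun _ => inferInstanceAs (Decidable (_ = _))

def upCount (p : DyckWord) (k : ℕ) : ℕ := (p.toList.take k).count U

def height (p : DyckWord) (k : ℕ) : ℤ := 2 * p.upCount k - k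

lemma length_eq_two_mul (hp : p.semilength = n) : p.toList.length = 2 * n := by
  rw [← p.two_mul_semilength_eq_length, hp]

lemma lt_length_of_up {t : ℕ} (ht : p.up t) : t < p.toList.length :=
  (List.getElem?_eq_some_iff.1 ht).1

lemma ext_up (hlen : p.toList.length = q.toList.length) (h : ∀ t, p.up t ↔ q.up t) : p = q := by
  refine DyckWord.ext (List.ext_getElem hlen fun t hp hq => ?_)
  have ht := h t
  simp only [up, List.getElem?_eq_getElem hp, List.getElem?_eq_getElem hq, Option.some.injEq] at ht
  rcases p.toList[t].dichotomy with h₁ | h₁ <;> rcases q.toList[t].dichotomy with h₂ | h₂ <;>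
    simp_all

lemma _root_.List.count_U_add_count_D (l : List DyckStep) : l.count U + l.count D = l.length := by
  induction l with
  | nil => rfl
  | cons s l ih => cases s <;> grind

lemma upCount_succ (k : ℕ) : p.upCount (k + 1) = p.upCount k + if p.up k then 1 else 0 := by
  rw [upCount, upCount, List.take_add_one, List.count_append]
  by_cases h : p.up k
  · rw [if_pos h, h]; rfl
  · rw [if_neg h]
    rcases hs : p.toList[k]? with _ | s
    · rfl
    · cases s <;> simp_all [up]

lemma height_succ (k : ℕ) : p.height (k + 1) = p.height k + if p.up k then 1 else -1 := by
  rw [height, height, upCount_succ]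
  split_ifs <;> push_cast <;> ring

lemma height_nonneg {k : ℕ} (hk : k ≤ p.toList.length) : 0 ≤ p.height k := by
  have hDU := p.count_D_le_count_U k
  have hlen := List.count_U_add_count_D (p.toList.take k)
  rw [List.length_take_of_le hk] at hlen
  unfold height upCount
  omega

lemma height_le (k : ℕ) : p.height k ≤ k := by
  have : p.upCount k ≤ k :=
    List.count_le_length.trans (List.length_take_le k _)
  unfold height
  omega

lemma upCount_le_semilength (k : ℕ) : p.upCount k ≤ p.semilength :=
  (List.take_sublist k _).count_le U

lemma height_add_le_two_mul (hp : p.semilength = n) (k : ℕ) : p.height k + k ≤ 2 * n := by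
  have := hp ▸ p.upCount_le_semilength k
  unfold height
  omega

lemma height_add_le (a d : ℕ) : p.height (a + d) ≤ p.height a + d := by
  induction d with
  | zero => simp
  | succ d ih =>
    rw [← add_assoc, height_succ]
    split_ifs <;> push_cast <;> omega

lemma height_add_of_up {a d : ℕ} (h : ∀ r < d, p.up (a + r)) :
    p.height (a + d) = p.height a + d := by
  induction d with
  | zero => simp
  | succ d ih =>
    rw [← add_assoc, height_succ, if_pos (h d d.lt_succ_self), ih fun r hr => h r (by omega)]
    push_cast; ring

lemma height_eq_of_up_iff {k : ℕ} (h : ∀ t < k, p.up t ↔ q.up t) : p.height k = q.height k := by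
  induction k with
  | zero => simp [height, upCount]
  | succ k ih =>
    rw [height_succ, height_succ, ih fun t ht => h t (by omega),
      if_congr (h k k.lt_succ_self) rfl rfl]

def turn (p : DyckWord) (t : ℕ) : ℤ := (if p.up t then 1 else 0) - if p.up (t + 1) then 1 else 0

def toASM (p : DyckWord) (n : ℕ) : Matrix (Fin n) (Fin n) ℤ := fun i j =>
  if |(i : ℤ) - j| < p.height (i + j + 1) then p.turn (i + j) else 0

lemma toASM_comm (i j : Fin n) : p.toASM n i j = p.toASM n j i := by
  rw [toASM, toASM, abs_sub_comm, add_comm (j : ℕ)]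

lemma transpose_toASM : (p.toASM n)ᵀ = p.toASM n := by
  ext i j
  exact toASM_comm j i

/-- The partial sum of row `i` of `p.toASM n` up to column `j` is
`p.rowPrefix (2 * i + 1) (i + j + 1)`. -/
def rowPrefix (p : DyckWord) (c : ℤ) (k : ℕ) : ℤ :=
  if p.up k then (if p.height k + c ≤ k then 1 else 0) else if c < p.height k + k then 1 else 0

lemma rowPrefix_zero_or_one (c : ℤ) (k : ℕ) : p.rowPrefix c k = 0 ∨ p.rowPrefix c k = 1 := by
  unfold rowPrefix
  split_ifs <;> simp

lemma toASM_eq_rowPrefix_sub (hp : p.semilength = n) (i j : Fin n) :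
    p.toASM n i j = p.rowPrefix (2 * i + 1) (i + j + 1) - p.rowPrefix (2 * i + 1) (i + j) := by
  have hlen := length_eq_two_mul hp
  have h₀ : 0 ≤ p.height (i + j + 1) := height_nonneg (by omega)
  have hstep := height_succ (p := p) (i + j)
  have hparity : p.height (i + j + 1) + (i + j + 1 : ℕ) = 2 * p.upCount (i + j + 1) := by
    unfold height; ring
  simp only [toASM, turn, rowPrefix, abs_sub_lt_iff]
  split_ifs at hstep ⊢ <;> push_cast at * <;> omega

lemma rowPrefix_self (i : ℕ) : p.rowPrefix (2 * i + 1) i = 0 := by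
  have := height_le (p := p) i
  unfold rowPrefix
  split_ifs with hup
  · have := height_nonneg (lt_length_of_up hup).le
    omega
  all_goals omega

lemma rowPrefix_add (hp : p.semilength = n) {i : ℕ} (hi : i < n) :
    p.rowPrefix (2 * i + 1) (i + n) = 1 := by
  have hlen := length_eq_two_mul hp
  have h₀ : 0 ≤ p.height (i + n + 1) := height_nonneg (by omega)
  have hle := height_add_le_two_mul hp (i + n + 1)
  have hstep := height_succ (p := p) (i + n)
  unfold rowPrefix
  split_ifs at hstep ⊢ <;> push_cast at * <;> omega

theorem isASM_toASM (hp : p.semilength = n) : IsASM (p.toASM n) := by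
  let R : Fin n → ℕ → ℤ := fun i t => p.rowPrefix (2 * i + 1) (i + t)
  have hAR : ∀ i j, p.toASM n i j = R i (j + 1) - R i j := toASM_eq_rowPrefix_sub hp
  exact isASM_of_partialSums _ R R (fun i t => rowPrefix_zero_or_one _ _)
    (fun i t => rowPrefix_zero_or_one _ _) hAR (fun i j => (toASM_comm i j).trans (hAR j i))
    (fun i => rowPrefix_self i) (fun i => rowPrefix_add hp i.isLt) (fun i => rowPrefix_self i)
    (fun i => rowPrefix_add hp i.isLt)

lemma card_filter_abs_lt_height (hp : p.semilength = n) {t : ℕ} (ht : t < 2 * n) :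
    (#{i : Fin n | |2 * (i : ℤ) - t| < p.height (t + 1)} : ℤ) = p.height (t + 1) := by
  have h₀ : 0 ≤ p.height (t + 1) := height_nonneg (by rw [length_eq_two_mul hp]; omega)
  have hle := height_le (p := p) (t + 1)
  have hn := hp ▸ p.upCount_le_semilength (t + 1)
  -- the band consists of the rows `i` with `#D ≤ i < #U` among the first `t + 1` steps
  have hband : ((range n).filter fun i : ℕ => |2 * (i : ℤ) - t| < p.height (t + 1)) =
      Ico (t + 1 - p.upCount (t + 1)) (p.upCount (t + 1)) := by
    ext i
    simp only [mem_filter, mem_range, mem_Ico, abs_sub_lt_iff, height] at *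
    omega
  rw [card_filter, Fin.sum_univ_eq_sum_range (fun i => if |2 * (i : ℤ) - t| < _ then 1 else 0),
    ← card_filter, hband, Nat.card_Ico]
  unfold height at *
  omega

lemma sum_antidiagonal_toASM (hp : p.semilength = n) (t : ℕ) (i : Fin n) :
    (∑ j : Fin n, if (i : ℕ) + j + 1 = t + 1 then p.toASM n i j else 0) =
      if |2 * (i : ℤ) - t| < p.height (t + 1) then p.turn t else 0 := by
  have hentry : ∀ j : Fin n, (i : ℕ) + j = t →
      p.toASM n i j = if |2 * (i : ℤ) - t| < p.height (t + 1) then p.turn t else 0 := by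
    intro j hij
    have hdiff : (i : ℤ) - j = 2 * i - t := by omega
    rw [toASM, hdiff, hij]
  by_cases hband : |2 * (i : ℤ) - t| < p.height (t + 1)
  · have hle := height_le (p := p) (t + 1)
    have hle' := height_add_le_two_mul hp (t + 1)
    rw [abs_sub_lt_iff] at hband
    let j₀ : Fin n := ⟨t - i, by omega⟩
    have hij₀ : (i : ℕ) + j₀ = t := show (i : ℕ) + (t - i) = t by omega
    rw [sum_eq_single j₀
      (fun j _ hj => if_neg fun h => hj (Fin.ext (show (j : ℕ) = t - i by omega)))
      (fun h => absurd (mem_univ _) h), if_pos (by omega), hentry j₀ hij₀]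
  · rw [if_neg hband]
    refine Finset.sum_eq_zero fun j _ => ?_
    split_ifs with hij
    · rw [hentry j (by omega), if_neg hband]
    · rfl

theorem xray_toASM (hp : p.semilength = n) {t : ℕ} (ht : t < 2 * n) :
    xray (p.toASM n) (t + 1) = p.turn t * p.height (t + 1) := by
  rw [xray, Finset.sum_congr rfl fun i _ => sum_antidiagonal_toASM hp t i, ← Finset.sum_filter,
    Finset.sum_const, nsmul_eq_mul, card_filter_abs_lt_height hp ht, mul_comm]

lemma exists_peak_of_up {t : ℕ} (hup : p.up t) :
    ∃ d, (∀ r ≤ d, p.up (t + r)) ∧ ¬ p.up (t + d + 1) := by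
  have hex : ∃ d, ¬ p.up (t + d + 1) :=
    ⟨p.toList.length, fun h => absurd (lt_length_of_up h) (by omega)⟩
  refine ⟨Nat.find hex, fun r hr => ?_, Nat.find_spec hex⟩
  rcases r with _ | r
  · exact hup
  · exact not_not.1 (Nat.find_min hex (by omega))

lemma exists_turn_mul_height_ne (hlen : p.toList.length = q.toList.length) {t : ℕ}
    (hagree : ∀ s < t, p.up s ↔ q.up s) (hp : p.up t) (hq : ¬ q.up t) :
    ∃ s < p.toList.length, p.turn s * p.height (s + 1) ≠ q.turn s * q.height (s + 1) := by
  obtain ⟨d, hrise, hfall⟩ := exists_peak_of_up hp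
  have hlt := lt_length_of_up (hrise d le_rfl)
  have hpeak : p.turn (t + d) = 1 := by simp [turn, hrise d le_rfl, hfall]
  have hp_height : p.height (t + d + 1) = p.height t + (d + 1 : ℕ) :=
    height_add_of_up (d := d + 1) fun r hr => hrise r (by omega)
  have hq_height : q.height (t + d + 1) ≤ q.height (t + 1) + d := by
    simpa only [add_right_comm] using height_add_le (p := q) (t + 1) d
  have hq_step := height_succ (p := q) t
  have hq_nonneg : 0 ≤ q.height (t + d + 1) := height_nonneg (by omega)
  have hstart : p.height t = q.height t := height_eq_of_up_iff hagree
  rw [if_neg hq] at hq_step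
  refine ⟨t + d, hlt, ?_⟩
  rw [hpeak, one_mul]
  unfold turn
  split_ifs <;> push_cast at * <;> omega

theorem eq_of_turn_mul_height_eq (hlen : p.toList.length = q.toList.length)
    (h : ∀ s < p.toList.length, p.turn s * p.height (s + 1) = q.turn s * q.height (s + 1)) :
    p = q := by
  refine ext_up hlen fun t => ?_
  by_contra hne
  have hex : ∃ t, ¬ (p.up t ↔ q.up t) := ⟨t, hne⟩
  have hagree : ∀ s < Nat.find hex, p.up s ↔ q.up s :=
    fun s hs => not_not.1 (Nat.find_min hex hs)
  by_cases hup : p.up (Nat.find hex)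
  · obtain ⟨s, hs, hne⟩ := exists_turn_mul_height_ne hlen hagree hup
      fun hq => Nat.find_spec hex (iff_of_true hup hq)
    exact hne (h s hs)
  · obtain ⟨s, hs, hne⟩ := exists_turn_mul_height_ne hlen.symm (fun s hs => (hagree s hs).symm)
      (not_not.1 fun hq => Nat.find_spec hex (iff_of_false hup hq)) hup
    exact hne (h s (hlen ▸ hs)).symm

theorem eq_of_xray_toASM_eq (hp : p.semilength = n) (hq : q.semilength = n)
    (h : ∀ k, xray (p.toASM n) k = xray (q.toASM n) k) : p = q := by
  have hlen := length_eq_two_mul hp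
  refine eq_of_turn_mul_height_eq (hlen.trans (length_eq_two_mul hq).symm) fun s hs => ?_
  rw [← xray_toASM hp (hlen ▸ hs), ← xray_toASM hq (hlen ▸ hs)]
  exact h (s + 1)

end DyckWord

theorem stmt_13 (n : ℕ) :
    ∃ f : {D : DyckWord // D.semilength = n} → Matrix (Fin n) (Fin n) ℤ,
      Function.Injective f ∧
      (∀ D, IsASM (f D) ∧ (f D)ᵀ = f D) ∧
      (∀ D D', D ≠ D' → ∃ k, xray (f D) k ≠ xray (f D') k) := by
  have hxray : ∀ D D' : {D : DyckWord // D.semilength = n},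
      (∀ k, xray (D.1.toASM n) k = xray (D'.1.toASM n) k) → D = D' :=
    fun D D' h => Subtype.ext (DyckWord.eq_of_xray_toASM_eq D.2 D'.2 h)
  refine ⟨fun D => D.1.toASM n, fun D D' h => hxray D D' fun k => congrArg (xray · k) h,
    fun D => ⟨DyckWord.isASM_toASM D.2, DyckWord.transpose_toASM⟩, fun D D' hne => ?_⟩
  by_contra! h
  exact hne (hxray D D' h)
end

section
/- If A is an n×n alternating sign matrix whose X-ray (x_1,…,x_{2n-1}) satisfies x_1 = ⋯ = x_{k-1} = 0 and x_k ≠ 0, then all entries on the first k-1 antidiagonals of A are 0, and the entries on the k-th antidiagonal are all 0 or 1 with exactly x_k ones; in particular x_k > 0. -/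
open Finset Matrix

/-!
In an alternating sign matrix the nonzero entries of a row alternate in sign, so the row sum is
either `0` or the first nonzero entry; since it is `1`, the first nonzero entry of every row is `1`.
Hence if all entries above an antidiagonal vanish, the entries on it are `0` or `1`, and the
antidiagonal sum counts its ones. Inductively, vanishing antidiagonal sums force whole
antidiagonals to vanish, up to the first nonzero one.
-/

theorem Finset.sum_eq_zero_or_eq_of_alternating {α M : Type*} [LinearOrder α] [AddCommGroup M]
    (f : α → M) (s : Finset α)
    (halt : ∀ a ∈ s, ∀ b ∈ s, a < b → (∀ c ∈ s, a < c → ¬c < b) → f b = -f a)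
    {a : α} (ha : a ∈ s) (hmin : ∀ x ∈ s, a ≤ x) :
    ∑ x ∈ s, f x = 0 ∨ ∑ x ∈ s, f x = f a := by
  classical
  induction s using Finset.induction_on_min generalizing a with
  | empty => simp at ha
  | insert b t hbt ih =>
    obtain rfl : a = b := by
      rcases mem_insert.mp ha with rfl | hat
      · rfl
      · exact absurd (hmin b (mem_insert_self b t)) (hbt a hat).not_ge
    rw [sum_insert fun hat => lt_irrefl a (hbt a hat)]
    rcases t.eq_empty_or_nonempty with rfl | ht
    · simp
    set c := t.min' ht
    have hc : c ∈ t := t.min'_mem ht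
    have hfc : f c = -f a := by
      refine halt a (mem_insert_self a t) c (mem_insert_of_mem hc) (hbt c hc) ?_
      intro d hd had hdc
      rcases mem_insert.mp hd with rfl | hdt
      · exact lt_irrefl d had
      · exact (t.min'_le d hdt).not_gt hdc
    have halt_t : ∀ x ∈ t, ∀ y ∈ t, x < y → (∀ z ∈ t, x < z → ¬z < y) → f y = -f x := by
      intro x hx y hy hxy hbetween
      refine halt x (mem_insert_of_mem hx) y (mem_insert_of_mem hy) hxy fun z hz hxz => ?_
      rcases mem_insert.mp hz with rfl | hzt
      · exact absurd hxz (hbt x hx).not_gt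
      · exact hbetween z hzt hxz
    rcases ih halt_t hc (fun x hx => t.min'_le x hx) with h | h
    · exact Or.inr (by rw [h, add_zero])
    · exact Or.inl (by rw [h, hfc, add_neg_cancel])

theorem eq_one_of_alternating_of_sum_eq_one {α : Type*} [LinearOrder α] [Fintype α] (r : α → ℤ)
    (halt : ∀ j₁ j₂, j₁ < j₂ → r j₁ ≠ 0 → r j₂ ≠ 0 →
      (∀ j, j₁ < j → j < j₂ → r j = 0) → r j₂ = -r j₁)
    (hsum : ∑ j, r j = 1) {j : α} (hj : r j ≠ 0) (hleft : ∀ j' < j, r j' = 0) : r j = 1 := by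
  classical
  let support : Finset α := {x | r x ≠ 0}
  have halt_support : ∀ a ∈ support, ∀ b ∈ support,
      a < b → (∀ c ∈ support, a < c → ¬c < b) → r b = -r a := by
    intro a ha b hb hab hbetween
    refine halt a b hab (mem_filter.mp ha).2 (mem_filter.mp hb).2 fun c hac hcb => ?_
    by_contra hc
    exact hbetween c (mem_filter.mpr ⟨mem_univ c, hc⟩) hac hcb
  have hfirst : ∀ x ∈ support, j ≤ x :=
    fun x hx => not_lt.mp fun hxj => (mem_filter.mp hx).2 (hleft x hxj)
  have hsum_support : ∑ x ∈ support, r x = 1 := by rw [sum_filter_ne_zero, hsum]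
  rcases sum_eq_zero_or_eq_of_alternating r support halt_support (mem_filter.mpr ⟨mem_univ j, hj⟩)
    hfirst with h | h <;> omega

namespace IsASM

variable {n : ℕ} {A : Matrix (Fin n) (Fin n) ℤ}

theorem eq_zero_or_eq_one_of_left_eq_zero (hA : IsASM A) {i j : Fin n}
    (hleft : ∀ j' < j, A i j' = 0) : A i j = 0 ∨ A i j = 1 :=
  or_iff_not_imp_left.mpr fun hj =>
    eq_one_of_alternating_of_sum_eq_one (A i) (hA.2.2.2.1 i) (hA.2.1 i) hj hleft

theorem antidiagonal_eq_zero_or_eq_one (hA : IsASM A) {m : ℕ}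
    (hbelow : ∀ i j : Fin n, (i : ℕ) + (j : ℕ) + 1 < m → A i j = 0)
    {i j : Fin n} (hij : (i : ℕ) + (j : ℕ) + 1 = m) : A i j = 0 ∨ A i j = 1 :=
  hA.eq_zero_or_eq_one_of_left_eq_zero fun j' hj' => hbelow i j' (by rw [Fin.lt_def] at hj'; omega)

end IsASM

theorem xray_eq_card_filter {n : ℕ} {A : Matrix (Fin n) (Fin n) ℤ} {m : ℕ}
    (h01 : ∀ i j : Fin n, (i : ℕ) + (j : ℕ) + 1 = m → A i j = 0 ∨ A i j = 1) :
    xray A m = #{p : Fin n × Fin n | (p.1 : ℕ) + (p.2 : ℕ) + 1 = m ∧ A p.1 p.2 = 1} := by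
  rw [Finset.natCast_card_filter, xray, ← Fintype.sum_prod_type']
  refine Finset.sum_congr rfl fun p _ => ?_
  by_cases hp : (p.1 : ℕ) + (p.2 : ℕ) + 1 = m
  · rcases h01 p.1 p.2 hp with h | h <;> simp [hp, h]
  · simp [hp]

theorem IsASM.eq_zero_of_xray_eq_zero {n : ℕ} {A : Matrix (Fin n) (Fin n) ℤ} (hA : IsASM A)
    {k : ℕ} (hzero : ∀ m, 1 ≤ m → m < k → xray A m = 0) :
    ∀ i j : Fin n, (i : ℕ) + (j : ℕ) + 1 < k → A i j = 0 := by
  induction k with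
  | zero => intro i j h; omega
  | succ k ih =>
    have hbelow := ih fun m hm hmk => hzero m hm (by omega)
    intro i j hij
    rcases Nat.lt_or_ge ((i : ℕ) + (j : ℕ) + 1) k with hlt | hge
    · exact hbelow i j hlt
    have hcard := xray_eq_card_filter (fun _ _ => hA.antidiagonal_eq_zero_or_eq_one hbelow)
    rw [hzero k (by omega) (by omega), eq_comm, Nat.cast_eq_zero, Finset.card_eq_zero,
      Finset.filter_eq_empty_iff] at hcard
    exact (hA.antidiagonal_eq_zero_or_eq_one hbelow (by omega)).resolve_right
      fun h1 => hcard (Finset.mem_univ (i, j)) ⟨show (i : ℕ) + (j : ℕ) + 1 = k by omega, h1⟩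

theorem stmt_14_general {n : ℕ} (A : Matrix (Fin n) (Fin n) ℤ) (hA : IsASM A)
    (k : ℕ) (hzero : ∀ m, 1 ≤ m → m < k → xray A m = 0)
    (hk0 : xray A k ≠ 0) :
    (∀ i j : Fin n, (i : ℕ) + (j : ℕ) + 1 < k → A i j = 0) ∧
    (∀ i j : Fin n, (i : ℕ) + (j : ℕ) + 1 = k → A i j = 0 ∨ A i j = 1) ∧
    ((Finset.univ.filter
        (fun p : Fin n × Fin n =>
          (p.1 : ℕ) + (p.2 : ℕ) + 1 = k ∧ A p.1 p.2 = 1)).card : ℤ) = xray A k ∧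
    0 < xray A k := by
  have hbelow := hA.eq_zero_of_xray_eq_zero hzero
  have h01 : ∀ i j : Fin n, (i : ℕ) + (j : ℕ) + 1 = k → A i j = 0 ∨ A i j = 1 :=
    fun _ _ => hA.antidiagonal_eq_zero_or_eq_one hbelow
  have hcard := xray_eq_card_filter h01
  exact ⟨hbelow, h01, hcard.symm, lt_of_le_of_ne (hcard ▸ Nat.cast_nonneg _) hk0.symm⟩

theorem stmt_14 {n : ℕ} (A : Matrix (Fin n) (Fin n) ℤ) (hA : IsASM A)
    (k : ℕ) (hk : 1 ≤ k) (hzero : ∀ m, 1 ≤ m → m < k → xray A m = 0)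
    (hk0 : xray A k ≠ 0) :
    (∀ i j : Fin n, (i : ℕ) + (j : ℕ) + 1 < k → A i j = 0) ∧
    (∀ i j : Fin n, (i : ℕ) + (j : ℕ) + 1 = k → A i j = 0 ∨ A i j = 1) ∧
    ((Finset.univ.filter
        (fun p : Fin n × Fin n =>
          (p.1 : ℕ) + (p.2 : ℕ) + 1 = k ∧ A p.1 p.2 = 1)).card : ℤ) = xray A k ∧
    0 < xray A k :=
  stmt_14_general A hA k hzero hk0
end

section
/- For n ≥ 3, there exist two distinct n×n alternating sign matrices with the same X-ray; equivalently, not every ASM of size n ≥ 3 is determined by its X-ray. -/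
/-!
Transposition preserves both the alternating sign matrix conditions (rows and columns swap roles)
and every antidiagonal sum, so any non-symmetric ASM and its transpose share an X-ray. For
`n ≥ 3` the permutation matrix of the cyclic rotation of `Fin n` is such an ASM, its transpose
being the permutation matrix of the inverse rotation.
-/

open Finset Matrix

theorem IsASM.transpose {n : ℕ} {A : Matrix (Fin n) (Fin n) ℤ} (hA : IsASM A) : IsASM Aᵀ :=
  let ⟨hentries, hrows, hcols, hrowAlt, hcolAlt⟩ := hA
  ⟨fun i j => hentries j i, hcols, hrows, hcolAlt, hrowAlt⟩

theorem xray_transpose {n : ℕ} (A : Matrix (Fin n) (Fin n) ℤ) (k : ℕ) :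
    xray Aᵀ k = xray A k := by
  rw [xray, xray, Finset.sum_comm]
  simp only [transpose_apply, Nat.add_comm]

theorem permMatrix_ne_zero_iff {n : ℕ} {σ : Equiv.Perm (Fin n)} {i j : Fin n} :
    permMatrix σ i j ≠ 0 ↔ σ j = i := by
  simp [permMatrix]

theorem isASM_permMatrix {n : ℕ} (σ : Equiv.Perm (Fin n)) : IsASM (permMatrix σ) := by
  refine ⟨fun i j => ?_, fun i => ?_, fun j => ?_, ?_, ?_⟩
  · unfold permMatrix; split_ifs <;> simp
  · simp [permMatrix, ← Equiv.eq_symm_apply]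
  · simp [permMatrix]
  · intro i j₁ j₂ hlt h₁ h₂ _
    rw [permMatrix_ne_zero_iff] at h₁ h₂
    exact absurd (σ.injective (h₁.trans h₂.symm)) hlt.ne
  · intro j i₁ i₂ hlt h₁ h₂ _
    rw [permMatrix_ne_zero_iff] at h₁ h₂
    exact absurd (h₁.symm.trans h₂) hlt.ne

theorem transpose_permMatrix {n : ℕ} (σ : Equiv.Perm (Fin n)) :
    (permMatrix σ)ᵀ = permMatrix σ⁻¹ := by
  ext i j
  simp_rw [transpose_apply, permMatrix, Equiv.Perm.inv_def, Equiv.symm_apply_eq, eq_comm (a := j)]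

theorem permMatrix_injective {n : ℕ} : Function.Injective (permMatrix (n := n)) := by
  intro σ τ h
  refine Equiv.ext fun j => ?_
  have hentry := congrFun (congrFun h (σ j)) j
  simpa [permMatrix, eq_comm] using hentry

theorem finRotate_inv_ne {n : ℕ} (hn : 3 ≤ n) : (finRotate n)⁻¹ ≠ finRotate n := by
  obtain ⟨m, rfl⟩ := Nat.exists_eq_add_of_le' hn
  intro h
  have htwice := (finRotate (m + 3)).symm_apply_apply ⟨0, by omega⟩
  rw [← Equiv.Perm.inv_def, h, finRotate_of_lt (by omega : 0 < m + 2), finRotate_of_lt (by omega : 1 < m + 2)] at htwice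
  simp at htwice

theorem stmt_17 {n : ℕ} (hn : 3 ≤ n) :
    ∃ A B : Matrix (Fin n) (Fin n) ℤ, IsASM A ∧ IsASM B ∧ A ≠ B ∧
      ∀ k, xray A k = xray B k := by
  set A := permMatrix (finRotate n)
  refine ⟨A, Aᵀ, isASM_permMatrix _, (isASM_permMatrix _).transpose, ?_,
    fun k => (xray_transpose A k).symm⟩
  rw [transpose_permMatrix]
  exact (permMatrix_injective.ne (finRotate_inv_ne hn)).symm
end
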